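/- arXiv:2005.08181 — 5 statements merged into one kernel-verified Lean document; each statement's English description precedes it below -/
import Mathlib

section
/- Let W ⊆ K^E be a linear subspace. Then the dimensions of Hadamard powers are weakly increasing: for all s' ≤ s in ℕ_{≥1}, dim_K W^{⋆s'} ≤ dim_K W^{⋆s}. -/
/-- The `s`-fold Hadamard power of a subspace `W ⊆ K^E`. -/
noncomputable def hadPow {K : Type*} [Field K] {E : Type*}
    (W : Submodule K (E → K)) (s : ℕ) : Submodule K (E → K) :=
  Submodule.span K {v | ∃ w : Fin s → (E → K), (∀ i, w i ∈ W) ∧ v = ∏ i, w i}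

/-!
Hadamard powers are the powers `W ^ s` of `W` in the algebra `E → K`, so
`W^{⋆s} = W^{⋆s'} ⋆ W^{⋆(s-s')}`. For `s' ≥ 1` the support of `W^{⋆s'}` lies in that of `W`,
which lies in that of every `W^{⋆n}` (through the powers `w ^ n`). It therefore suffices that
`dim A ≤ dim (A ⋆ B)` whenever the support of `A` lies in that of `B`. This goes by induction on
`dim A`: choose `a ∈ A` and `b ∈ B` that are both nonzero at a coordinate `e`. The subspace
`A₀ = {x ∈ A | x e = 0}` has codimension one in `A`, and `a ⋆ b ∉ A₀ ⋆ B` because every element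
of `A₀ ⋆ B` vanishes at `e`. Hence `dim (A ⋆ B) > dim (A₀ ⋆ B) ≥ dim A₀ ≥ dim A - 1`.
-/

open Module

namespace Submodule

theorem finrank_le_finrank_inf_ker_add_one {K V : Type*} [Field K] [AddCommGroup V]
    [Module K V] [FiniteDimensional K V] (A : Submodule K V) (f : Dual K V) :
    finrank K A ≤ finrank K ↥(A ⊓ LinearMap.ker f) + 1 := by
  have h := LinearMap.finrank_range_add_finrank_ker (f.domRestrict A)
  have hrange : finrank K (LinearMap.range (f.domRestrict A)) ≤ 1 :=
    (finrank_le _).trans (finrank_self K).le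
  rw [LinearMap.ker_domRestrict, ← finrank_map_subtype_eq, map_comap_subtype] at h
  omega

variable {K E : Type*} [Field K]

theorem hadPow_eq_pow (W : Submodule K (E → K)) (s : ℕ) : hadPow W s = W ^ s := by
  rw [hadPow, pow_eq_span_pow_set]
  congr 1
  ext v
  simp only [Set.mem_pow, Set.mem_ofPred_eq, List.prod_ofFn]
  constructor
  · rintro ⟨w, hw, rfl⟩
    exact ⟨fun i => ⟨w i, hw i⟩, rfl⟩
  · rintro ⟨w, rfl⟩
    exact ⟨fun i => w i, fun i => (w i).2, rfl⟩

theorem exists_mem_apply_ne_zero_of_mem_pow {W : Submodule K (E → K)} {n : ℕ} (hn : n ≠ 0)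
    {a : E → K} (ha : a ∈ W ^ n) {e : E} (hae : a e ≠ 0) : ∃ w ∈ W, w e ≠ 0 := by
  by_contra! hW
  obtain ⟨m, rfl⟩ := Nat.exists_eq_succ_of_ne_zero hn
  have hvanish : W ^ (m + 1) ≤ LinearMap.ker (LinearMap.proj e) := by
    rw [pow_succ, mul_le]
    intro x _ w hw
    simp [hW w hw]
  exact hae (hvanish ha)

theorem finrank_le_finrank_mul [Finite E] {A B : Submodule K (E → K)}
    (hAB : ∀ e, ∀ a ∈ A, a e ≠ 0 → ∃ b ∈ B, b e ≠ 0) :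
    finrank K A ≤ finrank K ↥(A * B) := by
  induction hn : finrank K A using Nat.strong_induction_on generalizing A with
  | _ n ih =>
  subst hn
  obtain h0 | hpos := (finrank K A).eq_zero_or_pos
  · simp [h0]
  obtain ⟨a, haA, ha0⟩ := exists_mem_ne_zero_of_ne_bot (one_le_finrank_iff.mp hpos)
  obtain ⟨e, hae⟩ := Function.ne_iff.mp ha0
  obtain ⟨b, hbB, hbe⟩ := hAB e a haA hae
  let A₀ := A ⊓ LinearMap.ker (LinearMap.proj e : (E → K) →ₗ[K] K)
  have hcodim : finrank K A ≤ finrank K A₀ + 1 :=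
    finrank_le_finrank_inf_ker_add_one A (LinearMap.proj e)
  have hA₀ : finrank K A₀ < finrank K A :=
    finrank_lt_finrank_of_lt
      (SetLike.lt_iff_le_and_exists.mpr ⟨inf_le_left, a, haA, fun h => hae h.2⟩)
  have hA₀B : finrank K ↥(A₀ * B) < finrank K ↥(A * B) := by
    have hvanish : A₀ * B ≤ LinearMap.ker (LinearMap.proj e) := by
      rw [mul_le]
      intro x hx y _
      simp [show x e = 0 from hx.2]
    exact finrank_lt_finrank_of_lt (SetLike.lt_iff_le_and_exists.mpr
      ⟨mul_le_mul' inf_le_left le_rfl, a * b, mul_mem_mul haA hbB,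
        fun h => mul_ne_zero hae hbe (hvanish h)⟩)
  have hind := ih _ hA₀ (A := A₀) (fun e a ha => hAB e a ha.1) rfl
  omega

end Submodule

theorem finrank_hadPow_mono {K : Type*} [Field K] {E : Type*} [Fintype E]
    (W : Submodule K (E → K)) (s s' : ℕ) (hs' : 1 ≤ s') (h : s' ≤ s) :
    Module.finrank K (hadPow W s') ≤ Module.finrank K (hadPow W s) := by
  rw [Submodule.hadPow_eq_pow, Submodule.hadPow_eq_pow, ← Nat.add_sub_cancel' h, pow_add]
  refine Submodule.finrank_le_finrank_mul fun e a ha hae => ?_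
  obtain ⟨w, hw, hwe⟩ := Submodule.exists_mem_apply_ne_zero_of_mem_pow (by omega) ha hae
  exact ⟨w ^ (s - s'), Submodule.pow_mem_pow _ hw _, by simpa using pow_ne_zero _ hwe⟩
end

section
/- Let W ⊆ K^E be a linear subspace. There exists a filtration F_1 ⊆ F_2 ⊆ ⋯ ⊆ F_t ⊆ ⋯ ⊆ E of subsets of E such that for all s' ≤ s, the projection π_{F_s} restricts to an injection on W^{⋆s'}, and restricts to a surjection (hence isomorphism) W^{⋆s} ≅ K^{F_s} when s' = s. -/
/-- The coordinate projection `π_F : K^E → K^F` for `F ⊆ E`. -/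
noncomputable def projF {K : Type*} [Field K] {E : Type*} (F : Set E) :
    (E → K) →ₗ[K] (F → K) :=
  LinearMap.funLeft K K (Subtype.val : F → E)

/-!
For `s ≥ 1` every element of `W^{⋆s}` vanishes wherever all of `W` vanishes, and multiplying by
`w ∈ W` maps `W^{⋆s}` into `W^{⋆(s+1)}`. Hence if `π_F` maps `W^{⋆s}` onto `K^F` and `F` lies in
the support of `W`, then `π_F` also maps `W^{⋆(s+1)}` onto `K^F`. Enlarging `F` to a maximal set
onto which `W^{⋆(s+1)}` still surjects makes `π_F` injective on `W^{⋆(s+1)}`, and injectivity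
descends to lower powers: if `x ∈ W^{⋆s'}` is nonzero at `e` but killed by `π_F`, then for
`w ∈ W` with `w e ≠ 0` the product `x * w ∈ W^{⋆(s'+1)}` is another such element.
-/

section HadamardPower

variable {K : Type*} [Field K] {E : Type*} {W : Submodule K (E → K)}

@[simp] lemma projF_apply (F : Set E) (x : E → K) (e : F) : projF F x e = x e := rfl

lemma projF_eq_zero_iff {F : Set E} {x : E → K} : projF F x = 0 ↔ ∀ e ∈ F, x e = 0 := by
  simp [funext_iff]

lemma hadPow_le_ker_proj {s : ℕ} (hs : 1 ≤ s) {e : E}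
    (hW : W ≤ LinearMap.ker (LinearMap.proj e)) :
    hadPow W s ≤ LinearMap.ker (LinearMap.proj e) := by
  rw [hadPow, Submodule.span_le]
  rintro v ⟨w, hw, rfl⟩
  simp only [SetLike.mem_coe, LinearMap.mem_ker, LinearMap.proj_apply, Finset.prod_apply]
  exact Finset.prod_eq_zero (Finset.mem_univ ⟨0, hs⟩) (hW (hw _))

lemma exists_mem_apply_ne_zero_of_mem_hadPow {s : ℕ} (hs : 1 ≤ s) {x : E → K}
    (hx : x ∈ hadPow W s) {e : E} (he : x e ≠ 0) : ∃ w ∈ W, w e ≠ 0 := by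
  by_contra! h
  exact he (hadPow_le_ker_proj hs (fun w hw => h w hw) hx)

lemma mul_mem_hadPow_succ {s : ℕ} {x w : E → K} (hx : x ∈ hadPow W s) (hw : w ∈ W) :
    x * w ∈ hadPow W (s + 1) := by
  suffices hadPow W s ≤ (hadPow W (s + 1)).comap (LinearMap.mulRight K w) from this hx
  rw [hadPow, Submodule.span_le]
  rintro v ⟨u, hu, rfl⟩
  refine Submodule.subset_span ⟨Fin.snoc u w, Fin.lastCases ?_ ?_, ?_⟩ <;> simp [hw, hu]

lemma disjoint_ker_projF_of_hadPow_succ {s : ℕ} (hs : 1 ≤ s) {F : Set E}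
    (h : Disjoint (hadPow W (s + 1)) (LinearMap.ker (projF F))) :
    Disjoint (hadPow W s) (LinearMap.ker (projF F)) := by
  rw [LinearMap.disjoint_ker] at h ⊢
  intro x hx hxF
  by_contra! hx0
  obtain ⟨e, hxe⟩ := Function.ne_iff.mp hx0
  obtain ⟨w, hw, hwe⟩ := exists_mem_apply_ne_zero_of_mem_hadPow hs hx hxe
  have hxw : x * w = 0 := h _ (mul_mem_hadPow_succ hx hw) <| by
    rw [projF_eq_zero_iff] at hxF ⊢
    intro e' he'
    simp [hxF e' he']
  exact mul_ne_zero hxe hwe (congrFun hxw e)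

lemma disjoint_ker_projF_of_le {s s' : ℕ} (hs' : 1 ≤ s') (hle : s' ≤ s) {F : Set E}
    (h : Disjoint (hadPow W s) (LinearMap.ker (projF F))) :
    Disjoint (hadPow W s') (LinearMap.ker (projF F)) := by
  induction s, hle using Nat.le_induction with
  | base => exact h
  | succ s hs ih => exact ih (disjoint_ker_projF_of_hadPow_succ (hs'.trans hs) h)

lemma map_projF_hadPow_succ_eq_top [Finite E] {s : ℕ} {F : Set E}
    (hsupp : ∀ e ∈ F, ∃ w ∈ W, w e ≠ 0) (hsurj : (hadPow W s).map (projF F) = ⊤) :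
    (hadPow W (s + 1)).map (projF F) = ⊤ := by
  classical
  rw [eq_top_iff, ← LinearMap.iSup_range_single, iSup_le_iff]
  rintro e _ ⟨c, rfl⟩
  obtain ⟨w, hw, hwe⟩ := hsupp e e.2
  obtain ⟨u, hu, hue⟩ : Pi.single e (c / w e) ∈ (hadPow W s).map (projF F) := hsurj ▸ trivial
  refine ⟨u * w, mul_mem_hadPow_succ hu hw, funext fun e' => ?_⟩
  have hu' : u e' = (Pi.single e (c / w e) : F → K) e' := congrFun hue e'
  rcases eq_or_ne e' e with rfl | hne
  · simp [hu', hwe]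
  · simp [hu', hne]

end HadamardPower

section CoordinateExtension

variable {K : Type*} [Field K] {E : Type*}

lemma map_projF_insert_eq_top {V : Submodule K (E → K)} {G : Set E}
    (hG : V.map (projF G) = ⊤) {v : E → K} (hv : v ∈ V) (hvG : ∀ e ∈ G, v e = 0)
    {e : E} (he : v e ≠ 0) : V.map (projF (insert e G)) = ⊤ := by
  rw [eq_top_iff]
  rintro t -
  obtain ⟨u, hu, hut⟩ : (fun g : G => t ⟨g, Set.mem_insert_of_mem _ g.2⟩) ∈ V.map (projF G) :=
    hG ▸ trivial
  -- correct `u` at the new coordinate `e` by a multiple of `v`, which is invisible on `G`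
  set c : K := (t ⟨e, Set.mem_insert _ _⟩ - u e) / v e
  refine ⟨u + c • v, V.add_mem hu (V.smul_mem _ hv), funext fun ⟨e', he'⟩ => ?_⟩
  rcases Set.mem_insert_iff.mp he' with rfl | he'
  · simp [c, div_mul_cancel₀ _ he]
  · simpa [hvG e' he'] using congrFun hut ⟨e', he'⟩

lemma exists_superset_map_projF_eq_top_disjoint_ker [Finite E] {V : Submodule K (E → K)}
    {F : Set E} (hF : V.map (projF F) = ⊤) :
    ∃ G, F ⊆ G ∧ V.map (projF G) = ⊤ ∧ Disjoint V (LinearMap.ker (projF G)) := by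
  obtain ⟨G, hFG, hmax⟩ := Finite.exists_le_maximal (p := fun G => V.map (projF G) = ⊤) hF
  refine ⟨G, hFG, hmax.1, LinearMap.disjoint_ker.mpr fun v hv hvG => ?_⟩
  by_contra! hv0
  obtain ⟨e, he⟩ := Function.ne_iff.mp hv0
  have hvG' : ∀ e ∈ G, v e = 0 := projF_eq_zero_iff.mp hvG
  have heG : e ∈ G := hmax.2 (map_projF_insert_eq_top hmax.1 hv hvG' he) (Set.subset_insert _ _)
    (Set.mem_insert e G)
  exact he (hvG' e heG)

end CoordinateExtension

lemma exists_superset_hadPow_succ {K : Type*} [Field K] {E : Type*} [Finite E]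
    {W : Submodule K (E → K)} {s : ℕ} {F : Set E} (hsurj : (hadPow W s).map (projF F) = ⊤)
    (hsupp : ∀ e ∈ F, ∃ w ∈ W, w e ≠ 0) :
    ∃ G, F ⊆ G ∧ ((hadPow W (s + 1)).map (projF G) = ⊤ ∧ ∀ e ∈ G, ∃ w ∈ W, w e ≠ 0) ∧
      Disjoint (hadPow W (s + 1)) (LinearMap.ker (projF G)) := by
  obtain ⟨G, hFG, hGsurj, hGdisj⟩ :=
    exists_superset_map_projF_eq_top_disjoint_ker (map_projF_hadPow_succ_eq_top hsupp hsurj)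
  refine ⟨G, hFG, ⟨hGsurj, fun e he => ?_⟩, hGdisj⟩
  obtain ⟨u, hu, hu1⟩ : (1 : G → K) ∈ (hadPow W (s + 1)).map (projF G) := hGsurj ▸ trivial
  have hue : u e = 1 := congrFun hu1 ⟨e, he⟩
  exact exists_mem_apply_ne_zero_of_mem_hadPow s.succ_pos hu (hue ▸ one_ne_zero)

/-- Lemma 1: there is a filtration `F_1 ⊆ F_2 ⊆ ⋯ ⊆ E` such that for `s' ≤ s`
the projection `π_{F_s}` is injective on `W^{⋆ s'}` and maps `W^{⋆ s}` onto `K^{F_s}`. -/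
theorem exists_filtration_hadPow {K : Type*} [Field K] {E : Type*} [Fintype E]
    (W : Submodule K (E → K)) :
    ∃ F : ℕ → Set E, (Monotone F) ∧
      (∀ s s' : ℕ, 1 ≤ s' → s' ≤ s →
        (∀ u ∈ hadPow W s', ∀ v ∈ hadPow W s', projF (F s) u = projF (F s) v → u = v)) ∧
      (∀ s : ℕ, 1 ≤ s → (hadPow W s).map (projF (F s)) = ⊤) := by
  let Good (s : ℕ) (G : Set E) : Prop :=
    (hadPow W s).map (projF G) = ⊤ ∧ ∀ e ∈ G, ∃ w ∈ W, w e ≠ 0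
  have good_zero : Good 0 ∅ := ⟨Subsingleton.elim _ _, by simp⟩
  choose next subset_next good_next disjoint_next using
    fun s (G : Set E) (hG : Good s G) => exists_superset_hadPow_succ hG.1 hG.2
  let F : (s : ℕ) → {G // Good s G} :=
    Nat.rec ⟨∅, good_zero⟩ fun s G => ⟨next s G G.2, good_next s G G.2⟩
  refine ⟨fun s => (F s).1, monotone_nat_of_le_succ fun s => subset_next s _ (F s).2, ?_,
    fun s _ => (F s).2.1⟩
  intro s s' hs' hle u hu v hv huv
  obtain ⟨k, rfl⟩ := Nat.exists_eq_add_of_le' (hs'.trans hle)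
  have hdisj := disjoint_ker_projF_of_le hs' hle (disjoint_next k _ (F k).2)
  exact LinearMap.disjoint_ker_iff_injOn.mp hdisj hu hv huv
end

section
/- Over a field K of characteristic 2, the polynomial x_1 x_2 + x_2 x_3 + x_3 x_1 is linearly contact equivalent to x_1 x_2 + x_3². -/
open MvPolynomial

/-- Linear contact equivalence of polynomials. -/
def ContactEquiv {K : Type*} [Field K] {σ τ : Type*} [Fintype σ] [Fintype τ]
    (φ : MvPolynomial σ K) (ψ : MvPolynomial τ K) : Prop :=
  ∃ (p : ℕ) (f : σ ↪ Fin p) (g : τ ↪ Fin p) (lam : Kˣ) (M : Matrix (Fin p) (Fin p) K),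
    IsUnit M.det ∧
    MvPolynomial.rename f φ =
      (lam : K) • MvPolynomial.aeval
        (fun i => ∑ j, MvPolynomial.C (M i j) * MvPolynomial.X j)
        (MvPolynomial.rename g ψ)

theorem ContactEquiv.of_linear_substitution {K : Type*} [Field K] {p : ℕ}
    {φ ψ : MvPolynomial (Fin p) K} (M : Matrix (Fin p) (Fin p) K) (hM : IsUnit M.det)
    (h : φ = aeval (fun i => ∑ j, C (M i j) * X j) ψ) : ContactEquiv φ ψ :=
  ⟨p, .refl _, .refl _, 1, M, hM, by
    simpa only [Function.Embedding.coe_refl, rename_id_apply, Units.val_one, one_smul] using h⟩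

theorem CharTwo.add_mul_add_add_sq {R : Type*} [CommRing R] [CharP R 2] (a b c : R) :
    (a + c) * (b + c) + c ^ 2 = a * b + b * c + c * a := by
  linear_combination c ^ 2 * CharTwo.two_eq_zero (R := R)

/-- Over a field of characteristic 2, `x₁x₂ + x₂x₃ + x₃x₁` is contact equivalent to
`x₁x₂ + x₃²`. -/
theorem triangle_contact_equiv_char_two {K : Type*} [Field K] [CharP K 2] :
    ContactEquiv
      (X 0 * X 1 + X 1 * X 2 + X 2 * X 0 : MvPolynomial (Fin 3) K)
      (X 0 * X 1 + X 2 ^ 2 : MvPolynomial (Fin 3) K) := by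
  -- `x₁ ↦ x₁ + x₃, x₂ ↦ x₂ + x₃` turns `x₁x₂ + x₃²` into the triangle plus `2x₃²`
  refine .of_linear_substitution !![1, 0, 1; 0, 1, 1; 0, 0, 1] ?_ ?_
  · simp [Matrix.det_fin_three]
  · simp [Fin.sum_univ_three, CharTwo.add_mul_add_add_sq]
end

section
/- For any λ ∈ K, the determinant of the symmetric matrix [[y_1, y_4, y_5],[y_4, y_2, λy_4],[y_5, λy_4, y_3]] is linearly contact equivalent to the determinant of [[y_1, y_4, y_5],[y_4, y_2, 0],[y_5, 0, y_3]], i.e. to y_3(y_1y_2 − y_4²) − y_2 y_5². -/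
open MvPolynomial

/-! The substitution `y₅ ↦ y₅ - λy₁`, `y₃ ↦ y₃ - 2λy₅ + λ²y₁` turns the second matrix into
`Fᵀ A F`, where `A` is the first matrix and `F` is the column operation `c₃ ↦ c₃ - λc₁`
(which clears the entry `λy₄`). Since `det F = 1`, the two determinants correspond. -/

open scoped Matrix

section

variable {K : Type*} [Field K]

noncomputable def linearSubst {n : ℕ} (M : Matrix (Fin n) (Fin n) K) (i : Fin n) :
    MvPolynomial (Fin n) K :=
  ∑ j, C (M i j) * X j

theorem contactEquiv_of_eq_aeval_linearSubst {n : ℕ} {φ ψ : MvPolynomial (Fin n) K}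
    (M : Matrix (Fin n) (Fin n) K) (hM : IsUnit M.det) (h : φ = aeval (linearSubst M) ψ) :
    ContactEquiv φ ψ :=
  ⟨n, .refl _, .refl _, 1, M, hM, by
    rw [Function.Embedding.coe_refl, rename_id, Units.val_one, one_smul]
    exact h⟩

def shearMatrix (lam : K) : Matrix (Fin 5) (Fin 5) K :=
  !![1, 0, 0, 0, 0;
     0, 1, 0, 0, 0;
     lam ^ 2, 0, 1, 0, -2 * lam;
     0, 0, 0, 1, 0;
     -lam, 0, 0, 0, 1]

theorem det_shearMatrix (lam : K) : (shearMatrix lam).det = 1 := by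
  simp [shearMatrix, Matrix.det_succ_row_zero, Fin.sum_univ_succ]

theorem linearSubst_shearMatrix (lam : K) :
    linearSubst (shearMatrix lam) =
      ![X 0, X 1, X 2 - C (2 * lam) * X 4 + C (lam ^ 2) * X 0, X 3, X 4 - C lam * X 0] := by
  funext i
  fin_cases i <;> simp [linearSubst, shearMatrix, Fin.sum_univ_five] <;> ring

noncomputable def columnShear (lam : K) : Matrix (Fin 3) (Fin 3) (MvPolynomial (Fin 5) K) :=
  !![1, 0, -C lam; 0, 1, 0; 0, 0, 1]

theorem det_columnShear (lam : K) : (columnShear lam).det = 1 := by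
  simp [columnShear, Matrix.det_fin_three]

theorem columnShear_transpose_mul_mul_columnShear (lam : K) :
    (columnShear lam)ᵀ * !![X 0, X 3, X 4; X 3, X 1, C lam * X 3; X 4, C lam * X 3, X 2] *
        columnShear lam =
      (aeval (R := K) (linearSubst (shearMatrix lam))).mapMatrix
        !![X 0, X 3, X 4; X 3, X 1, 0; X 4, 0, X 2] := by
  rw [linearSubst_shearMatrix]
  ext i j : 1
  fin_cases i <;> fin_cases j <;>
    simp [columnShear, Matrix.mul_apply, Fin.sum_univ_three, map_ofNat] <;> ring

end

/-- For `λ ∈ K`, `det [[y₁, y₄, y₅],[y₄, y₂, λy₄],[y₅, λy₄, y₃]]` is contact equivalent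
to `det [[y₁, y₄, y₅],[y₄, y₂, 0],[y₅, 0, y₃]] = y₃(y₁y₂ - y₄²) - y₂y₅²`. -/
theorem det_contact_equiv_lam {K : Type*} [Field K] (lam : K) :
    ContactEquiv
      (Matrix.det !![X 0, X 3, X 4;
                     X 3, X 1, C lam * X 3;
                     X 4, C lam * X 3, X 2] : MvPolynomial (Fin 5) K)
      (Matrix.det !![X 0, X 3, X 4;
                     X 3, X 1, 0;
                     X 4, 0, X 2] : MvPolynomial (Fin 5) K) := by
  refine contactEquiv_of_eq_aeval_linearSubst (shearMatrix lam)
    (det_shearMatrix lam ▸ isUnit_one) ?_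
  rw [AlgHom.map_det, ← columnShear_transpose_mul_mul_columnShear, Matrix.det_mul,
    Matrix.det_mul, Matrix.det_transpose, det_columnShear, one_mul, mul_one]
end

section
/- For any λ, μ ∈ K^*, the determinant of [[y_1, y_4, λy_4+μy_5],[y_4, y_2, y_5],[λy_4+μy_5, y_5, y_3]] is linearly contact equivalent to the determinant of [[y_1, y_4, y_4+y_5],[y_4, y_2, y_5],[y_4+y_5, y_5, y_3]]. -/
/-!
Let `A_{λ,μ}` be the matrix of the statement. Substituting `y ↦ (μ⁻²y₁, y₂, λ⁻²y₃, μ⁻¹y₄, λ⁻¹y₅)`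
in `A_{1,1}` and multiplying on both sides by `diag(μ, 1, λ)` gives back `A_{λ,μ}`, so taking
determinants `det A_{λ,μ}(y) = λ²μ² · det A_{1,1}(μ⁻²y₁, y₂, λ⁻²y₃, μ⁻¹y₄, λ⁻¹y₅)`.
-/

open MvPolynomial

namespace ContactEquiv

variable {K : Type*} [Field K] {n : ℕ} {φ ψ : MvPolynomial (Fin n) K}

theorem of_eq_smul_aeval (c : Kˣ) (M : Matrix (Fin n) (Fin n) K) (hM : IsUnit M.det)
    (h : φ = (c : K) • aeval (fun i => ∑ j, C (M i j) * X j) ψ) :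
    ContactEquiv φ ψ :=
  ⟨n, .refl _, .refl _, c, M, hM, by simpa [Function.Embedding.coe_refl, rename_id] using h⟩

theorem of_eq_smul_aeval_diagonal (c : Kˣ) (d : Fin n → K) (hd : ∀ i, d i ≠ 0)
    (h : φ = (c : K) • aeval (fun i => C (d i) * X i) ψ) :
    ContactEquiv φ ψ := by
  refine of_eq_smul_aeval c (Matrix.diagonal d) ?_ ?_
  · simpa [Matrix.det_diagonal, Finset.prod_ne_zero_iff] using hd
  · simpa [Matrix.diagonal_apply, apply_ite C, ite_mul] using h

end ContactEquiv

section SymmMatrix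

variable {K : Type*} [Field K]

noncomputable def symmMatrix (lam mu : K) : Matrix (Fin 3) (Fin 3) (MvPolynomial (Fin 5) K) :=
  !![X 0, X 3, C lam * X 3 + C mu * X 4;
     X 3, X 1, X 4;
     C lam * X 3 + C mu * X 4, X 4, X 2]

theorem symmMatrix_one_one :
    symmMatrix (1 : K) 1 = !![X 0, X 3, X 3 + X 4; X 3, X 1, X 4; X 3 + X 4, X 4, X 2] := by
  simp [symmMatrix]

theorem symmMatrix_eq_diagonal_mul_map_mul_diagonal {lam mu : K}
    (hlam : lam ≠ 0) (hmu : mu ≠ 0) :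
    symmMatrix lam mu =
      Matrix.diagonal ![C mu, 1, C lam] *
        (symmMatrix (1 : K) 1).map
          (aeval fun i => C (![mu⁻¹ ^ 2, 1, lam⁻¹ ^ 2, mu⁻¹, lam⁻¹] i) * X i) *
        Matrix.diagonal ![C mu, 1, C lam] := by
  ext i j : 1
  fin_cases i <;> fin_cases j <;> simp [symmMatrix, Matrix.mul_apply, Fin.sum_univ_three] <;>
    simp only [mul_comm _ (C lam), mul_comm _ (C mu), ← smul_eq_C_mul] <;>
    match_scalars <;> field_simp

theorem det_symmMatrix {lam mu : K} (hlam : lam ≠ 0) (hmu : mu ≠ 0) :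
    (symmMatrix lam mu).det =
      (lam ^ 2 * mu ^ 2) • aeval (fun i => C (![mu⁻¹ ^ 2, 1, lam⁻¹ ^ 2, mu⁻¹, lam⁻¹] i) * X i)
        (symmMatrix (1 : K) 1).det := by
  rw [symmMatrix_eq_diagonal_mul_map_mul_diagonal hlam hmu, Matrix.det_mul, Matrix.det_mul,
    Matrix.det_diagonal, AlgHom.map_det, AlgHom.mapMatrix_apply, smul_eq_C_mul]
  simp only [Fin.prod_univ_three, Matrix.cons_val, map_mul, map_pow]
  ring

end SymmMatrix

/-- For `λ, μ ∈ K^*`, `det [[y₁, y₄, λy₄+μy₅],[y₄, y₂, y₅],[λy₄+μy₅, y₅, y₃]]` is contact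
equivalent to the case `λ = μ = 1`. -/
theorem det_contact_equiv_lam_mu' {K : Type*} [Field K] (lam mu : K)
    (hlam : lam ≠ 0) (hmu : mu ≠ 0) :
    ContactEquiv
      (Matrix.det !![X 0, X 3, C lam * X 3 + C mu * X 4;
                     X 3, X 1, X 4;
                     C lam * X 3 + C mu * X 4, X 4, X 2] : MvPolynomial (Fin 5) K)
      (Matrix.det !![X 0, X 3, X 3 + X 4;
                     X 3, X 1, X 4;
                     X 3 + X 4, X 4, X 2] : MvPolynomial (Fin 5) K) := by
  rw [← symmMatrix_one_one]
  refine ContactEquiv.of_eq_smul_aeval_diagonal (Units.mk0 _ (by positivity)) _ ?_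
    (det_symmMatrix hlam hmu)
  intro i
  fin_cases i <;> simp [hlam, hmu]
end
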